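/- arXiv:1206.4572 — 4 statements merged into one kernel-verified Lean document; each statement's English description precedes it below -/
import Mathlib

section
/- Let a be a binary sequence of length n with γ runs. Then for every k with 0 ≤ k ≤ n, C_k(a) = n + (1 − 2γ)·k − 2·Σ_{j=1}^{k−1} (k−j)·R_j(a). -/
/-- The `k`-th aperiodic autocorrelation of a sequence `a` of length `n`:
`C_k(a) = ∑_{i=1}^{n-k} a_i a_{i+k}` (so `C_n(a) = 0`). -/
def aperCorr (a : ℕ → ℤ) (n k : ℕ) : ℤ :=
  ∑ i ∈ Finset.Icc 1 (n - k), a i * a (i + k)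

/-- The number of runs of the sequence `a` of length `n` (with `a 0 = 0`). -/
def numRuns (a : ℕ → ℤ) (n : ℕ) : ℕ :=
  ((Finset.Icc 1 n).filter (fun i => a i ≠ a (i - 1))).card

/-- The `k`-th component of the run vector of the sequence `a` of length `n`
(with `a 0 = 0` and `a (n+1) = 0`): minus the sum of the weights of all run
blocks `a(i, i+k)` of `a` of length `k`. -/
def runVec (a : ℕ → ℤ) (n k : ℕ) : ℤ :=
  -∑ i ∈ Finset.Icc 1 (n + 1 - k),
    (if a (i - 1) ≠ a i ∧ a (i + k - 1) ≠ a (i + k) then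
      (if 1 < i ∧ i + k < n + 1 then 2 else 1) * (a i * a (i + k - 1))
    else 0)

/-!
With the zero padding `a 0 = a (n + 1) = 0`, put `d i = a (i + 1) - a i`. Expanding
`∑ i, d i * d (i + k)` gives `2 C_k - C_{k-1} - C_{k+1}`. On the other hand `d i ≠ 0` exactly when a
run starts at `i + 1` or ends at `i`, so `d i * d (i + k)` is nonzero exactly when `a(i+1, i+k+1)` is a
run block, and it is then `-2` times the weight of that block. Hence the second differences of
`k ↦ C_k` are `-2 R_k`; together with `C_0 = n` and `C_1 = n + 1 - 2γ`, summing twice gives the formula.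
-/

open Finset

theorem sum_Icc_one_eq_sum_range {M : Type*} [AddCommMonoid M] (f : ℕ → M) (N : ℕ) :
    ∑ i ∈ Icc 1 N, f i = ∑ i ∈ range N, f (i + 1) := by
  rw [range_eq_Ico, sum_Ico_add', ← Ico_add_one_right_eq_Icc, zero_add]

theorem sum_Icc_pred_mul_eq_sum_Icc (r : ℕ → ℤ) (k : ℕ) :
    ∑ j ∈ Icc 1 (k - 1), ((k : ℤ) - j) * r j = ∑ j ∈ Icc 1 k, ((k : ℤ) - j) * r j := by
  cases k with
  | zero => simp
  | succ k => simp [sum_Icc_succ_top]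

theorem sum_Icc_mul_add_two (r : ℕ → ℤ) (m : ℕ) :
    ∑ j ∈ Icc 1 (m + 2), ((m + 2 : ℕ) - (j : ℤ)) * r j
      = 2 * ∑ j ∈ Icc 1 (m + 1), ((m + 1 : ℕ) - (j : ℤ)) * r j
        - ∑ j ∈ Icc 1 m, ((m : ℕ) - (j : ℤ)) * r j + r (m + 1) := by
  have hm : ∑ j ∈ Icc 1 m, ((m + 2 : ℕ) - (j : ℤ)) * r j
      = 2 * ∑ j ∈ Icc 1 m, ((m + 1 : ℕ) - (j : ℤ)) * r j
        - ∑ j ∈ Icc 1 m, ((m : ℕ) - (j : ℤ)) * r j := by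
    rw [mul_sum, ← sum_sub_distrib]
    refine sum_congr rfl fun j _ => ?_
    push_cast
    ring
  rw [sum_Icc_succ_top (by omega : 1 ≤ m + 1 + 1), sum_Icc_succ_top (by omega : 1 ≤ m + 1),
    sum_Icc_succ_top (by omega : 1 ≤ m + 1), hm]
  push_cast
  ring

theorem eq_of_second_difference {f r : ℕ → ℤ} {N : ℕ}
    (h : ∀ m, m + 2 ≤ N → f (m + 2) = 2 * f (m + 1) - f m - 2 * r (m + 1)) :
    ∀ k ≤ N, f k = f 0 + (f 1 - f 0) * k - 2 * ∑ j ∈ Icc 1 (k - 1), ((k : ℤ) - j) * r j := by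
  simp only [sum_Icc_pred_mul_eq_sum_Icc]
  intro k
  induction k using Nat.twoStepInduction with
  | zero => simp
  | one => simp
  | more m ih₀ ih₁ =>
    intro hk
    rw [h m hk, ih₀ (by omega), ih₁ (by omega), sum_Icc_mul_add_two]
    push_cast
    ring

theorem mul_eq_one_sub_two_mul_ite {x y : ℤ} (hx : x = 1 ∨ x = -1) (hy : y = 1 ∨ y = -1) :
    x * y = 1 - 2 * if y ≠ x then 1 else 0 := by
  rcases hx with rfl | rfl <;> rcases hy with rfl | rfl <;> decide

theorem sub_mul_sub_eq_neg_two_mul_ite {x y z w : ℤ} {p q : Prop} [Decidable p] [Decidable q]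
    (hpq : p ∨ q) (hy : y = 1 ∨ y = -1) (hz : z = 1 ∨ z = -1)
    (hx : if p then x = 1 ∨ x = -1 else x = 0) (hw : if q then w = 1 ∨ w = -1 else w = 0) :
    (y - x) * (w - z) =
      -2 * if x ≠ y ∧ z ≠ w then (if p ∧ q then 2 else 1) * (y * z) else 0 := by
  by_cases hp : p <;> by_cases hq : q <;> simp only [hp, hq, if_true, if_false, or_false] at hx hw hpq <;>
    rcases hy with rfl | rfl <;> rcases hz with rfl | rfl <;> (try rcases hx with rfl | rfl) <;>
    (try rcases hw with rfl | rfl) <;> simp [hp, hq]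

section RunVector

variable {n : ℕ} {a : ℕ → ℤ}

theorem aperCorr_zero (hbin : ∀ i, 1 ≤ i → i ≤ n → a i = 1 ∨ a i = -1) :
    aperCorr a n 0 = n := by
  have hsq : ∀ i ∈ Icc 1 n, a i * a (i + 0) = 1 := fun i hi => by
    obtain ⟨h₁, h₂⟩ := mem_Icc.mp hi
    rcases hbin i h₁ h₂ with h | h <;> simp [h]
  rw [aperCorr, Nat.sub_zero, sum_congr rfl hsq]
  simp

theorem numRuns_eq_sum :
    (numRuns a n : ℤ) = ∑ i ∈ range n, if a (i + 1) ≠ a i then 1 else 0 := by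
  rw [numRuns, natCast_card_filter, sum_Icc_one_eq_sum_range]
  simp

theorem aperCorr_one (hn : 1 ≤ n) (hbin : ∀ i, 1 ≤ i → i ≤ n → a i = 1 ∨ a i = -1)
    (h0 : a 0 = 0) :
    aperCorr a n 1 = n + 1 - 2 * numRuns a n := by
  obtain ⟨n, rfl⟩ : ∃ n', n = n' + 1 := ⟨n - 1, by omega⟩
  have hfirst : a 1 ≠ a 0 := by rcases hbin 1 le_rfl hn with h | h <;> simp [h, h0]
  have hterm : ∀ i ∈ range n, a (i + 1) * a (i + 1 + 1)
      = 1 - 2 * if a (i + 1 + 1) ≠ a (i + 1) then 1 else 0 := fun i hi => by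
    have := mem_range.mp hi
    exact mul_eq_one_sub_two_mul_ite (hbin _ (by omega) (by omega)) (hbin _ (by omega) (by omega))
  rw [numRuns_eq_sum, sum_range_succ', if_pos hfirst, aperCorr, Nat.add_sub_cancel,
    sum_Icc_one_eq_sum_range, sum_congr rfl hterm, sum_sub_distrib, ← mul_sum]
  simp only [sum_const, card_range, Int.nsmul_eq_mul, mul_one, ne_eq, ite_not, Nat.cast_add,
    Nat.cast_one]
  ring

theorem aperCorr_eq_sum_range (h0 : a 0 = 0) (htop : a (n + 1) = 0) {k : ℕ} (hk : k ≤ n) :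
    aperCorr a n k = ∑ i ∈ range (n - k + 2), a i * a (i + k) := by
  rw [aperCorr, sum_Icc_one_eq_sum_range, sum_range_succ, sum_range_succ',
    show n - k + 1 + k = n + 1 by omega]
  simp [h0, htop, add_right_comm]

theorem sum_sub_mul_sub_eq (h0 : a 0 = 0) (htop : a (n + 1) = 0) {m : ℕ} (hm : m + 2 ≤ n) :
    ∑ i ∈ range (n - m), (a (i + 1) - a i) * (a (i + m + 2) - a (i + m + 1))
      = 2 * aperCorr a n (m + 1) - aperCorr a n m - aperCorr a n (m + 2) := by
  have hC₀ := aperCorr_eq_sum_range h0 htop (k := m) (by omega)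
  have hC₁ := aperCorr_eq_sum_range h0 htop (k := m + 1) (by omega)
  have hC₂ := aperCorr_eq_sum_range h0 htop (k := m + 2) (by omega)
  obtain ⟨s, hs⟩ : ∃ s, n = s + m + 2 := ⟨n - (m + 2), by omega⟩
  subst hs
  rw [show s + m + 2 - m = s + 2 by omega] at hC₀ ⊢
  rw [show s + m + 2 - (m + 1) = s + 1 by omega] at hC₁
  rw [show s + m + 2 - (m + 2) = s by omega] at hC₂
  have e₁ : ∑ i ∈ range (s + 2), a (i + 1) * a (i + m + 2) = aperCorr a (s + m + 2) (m + 1) := by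
    rw [hC₁, sum_range_succ' _ (s + 2), h0, zero_mul, add_zero]
    exact sum_congr rfl fun i _ => by rw [show i + 1 + (m + 1) = i + m + 2 by omega]
  have e₂ : ∑ i ∈ range (s + 2), a (i + 1) * a (i + m + 1) = aperCorr a (s + m + 2) m := by
    rw [hC₀, sum_range_succ _ (s + 2 + 1), sum_range_succ' _ (s + 2), h0, zero_mul, add_zero,
      show s + 2 + 1 + m = s + m + 2 + 1 by omega, htop, mul_zero, add_zero]
    exact sum_congr rfl fun i _ => by rw [show i + 1 + m = i + m + 1 by omega]
  have e₃ : ∑ i ∈ range (s + 2), a i * a (i + m + 2) = aperCorr a (s + m + 2) (m + 2) := by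
    rw [hC₂]
    exact sum_congr rfl fun i _ => by rw [add_assoc]
  have e₄ : ∑ i ∈ range (s + 2), a i * a (i + m + 1) = aperCorr a (s + m + 2) (m + 1) := by
    rw [hC₁, sum_range_succ _ (s + 2), show s + 2 + (m + 1) = s + m + 2 + 1 by omega, htop,
      mul_zero, add_zero]
    exact sum_congr rfl fun i _ => by rw [add_assoc]
  simp only [mul_sub, sub_mul, sum_sub_distrib, e₁, e₂, e₃, e₄]
  ring

theorem sum_sub_mul_sub_eq_runVec (hbin : ∀ i, 1 ≤ i → i ≤ n → a i = 1 ∨ a i = -1)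
    (h0 : a 0 = 0) (htop : a (n + 1) = 0) {m : ℕ} (hm : m + 2 ≤ n) :
    ∑ i ∈ range (n - m), (a (i + 1) - a i) * (a (i + m + 2) - a (i + m + 1))
      = 2 * runVec a n (m + 1) := by
  rw [runVec, mul_neg, ← neg_mul, mul_sum, show n + 1 - (m + 1) = n - m by omega,
    sum_Icc_one_eq_sum_range]
  refine sum_congr rfl fun i hi => ?_
  have hi := mem_range.mp hi
  rw [show i + 1 + (m + 1) - 1 = i + m + 1 by omega, show i + 1 + (m + 1) = i + m + 2 by omega,
    Nat.add_sub_cancel]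
  refine sub_mul_sub_eq_neg_two_mul_ite (by omega) (hbin _ (by omega) (by omega))
    (hbin _ (by omega) (by omega)) ?_ ?_
  · split_ifs with h
    · exact hbin i (by omega) (by omega)
    · rwa [show i = 0 by omega]
  · split_ifs with h
    · exact hbin _ (by omega) (by omega)
    · rwa [show i + m + 2 = n + 1 by omega]

theorem aperCorr_add_two (hbin : ∀ i, 1 ≤ i → i ≤ n → a i = 1 ∨ a i = -1)
    (h0 : a 0 = 0) (htop : a (n + 1) = 0) {m : ℕ} (hm : m + 2 ≤ n) :
    aperCorr a n (m + 2) = 2 * aperCorr a n (m + 1) - aperCorr a n m - 2 * runVec a n (m + 1) := by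
  linarith [sum_sub_mul_sub_eq h0 htop hm, sum_sub_mul_sub_eq_runVec hbin h0 htop hm]

end RunVector

theorem stmt_4_general (n : ℕ) (a : ℕ → ℤ)
    (hbin : ∀ i, 1 ≤ i → i ≤ n → a i = 1 ∨ a i = -1)
    (h0 : a 0 = 0) (htop : a (n + 1) = 0)
    (k : ℕ) (hk : k ≤ n) :
    aperCorr a n k = (n : ℤ) + (1 - 2 * (numRuns a n : ℤ)) * k
      - 2 * ∑ j ∈ Finset.Icc 1 (k - 1), ((k : ℤ) - j) * runVec a n j := by
  rcases Nat.eq_zero_or_pos k with rfl | hk₀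
  · simp [aperCorr_zero hbin]
  rw [eq_of_second_difference (fun m hm => aperCorr_add_two hbin h0 htop hm) k hk,
    aperCorr_zero hbin, aperCorr_one (by omega) hbin h0]
  ring

theorem stmt_4 (n : ℕ) (hn : 1 ≤ n) (a : ℕ → ℤ)
    (hbin : ∀ i, 1 ≤ i → i ≤ n → a i = 1 ∨ a i = -1)
    (h0 : a 0 = 0) (htop : a (n + 1) = 0)
    (k : ℕ) (hk : k ≤ n) :
    aperCorr a n k = (n : ℤ) + (1 - 2 * (numRuns a n : ℤ)) * k
      - 2 * ∑ j ∈ Finset.Icc 1 (k - 1), ((k : ℤ) - j) * runVec a n j :=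
  stmt_4_general n a hbin h0 htop k hk
end

section
/- Let a be a binary sequence of length n with γ runs and run length encoding r = (r_1,…,r_γ). Then for every k with 1 ≤ k ≤ n−1, (−1)^γ·R_{n−k}(a) = f_S(k) + f_T(k) + 2·Σ_{j=1}^{γ−1} (−1)^j·f_T(k − s_j). -/
/-!
The run blocks of `a` are exactly the substrings between two run boundaries `s_p < s_q`
(with `s_0 = 0`, `s_γ = n`), and the block between them has weight `-(-1)^(p+q)`, doubled unless
`p = 0` or `q = γ`. Writing `s_q = n - t_(γ-q)`, the blocks of length `n - k` correspond to the
pairs `(p, q)` with `s_p + t_q = k`: those with `p = 0` give `f_T(k)`, those with `q = 0` give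
`f_S(k)`, and the remaining ones, counted twice, `Σ_j (-1)^j f_T(k - s_j)`.
-/

open Finset

lemma exists_le_lt_succ_of_le_of_lt (S : ℕ → ℕ) {x : ℕ} :
    ∀ {γ}, S 0 ≤ x → x < S γ → ∃ p < γ, S p ≤ x ∧ x < S (p + 1)
  | 0, h0, hγ => absurd hγ (not_lt.2 h0)
  | γ + 1, h0, hγ => by
    by_cases hx : x < S γ
    · obtain ⟨p, hp, hpx⟩ := exists_le_lt_succ_of_le_of_lt S h0 hx
      exact ⟨p, by omega, hpx⟩
    · exact ⟨γ, by omega, by omega, hγ⟩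

lemma sum_Icc_one_add_sum_Icc_add_one {M : Type*} [AddCommMonoid M] (f : ℕ → M) {c d : ℕ}
    (hcd : c ≤ d) : ∑ i ∈ Icc 1 c, f i + ∑ i ∈ Icc (c + 1) d, f i = ∑ i ∈ Icc 1 d, f i := by
  have := sum_Ioc_consecutive f (Nat.zero_le c) hcd
  simpa only [← Icc_add_one_left_eq_Ioc, zero_add] using this

lemma sum_Icc_zero_add_one_eq {M : Type*} [AddCommMonoid M] (f : ℕ → M) (g : ℕ) :
    ∑ p ∈ Icc 0 (g + 1), f p = f 0 + ∑ p ∈ Icc 1 g, f p + f (g + 1) := by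
  rw [sum_Icc_succ_top (Nat.zero_le _), Icc_eq_cons_Ioc (Nat.zero_le _), sum_cons,
    ← Icc_add_one_left_eq_Ioc, zero_add]

lemma eq_sum_Icc_ite_of_injOn {f : ℤ → ℤ} {g : ℕ} {u v : ℕ → ℕ} (hu : Set.InjOn u (Set.Icc 1 g))
    (hv : ∀ j, 1 ≤ j → j ≤ g → v j = u j) (hf : ∀ j, 1 ≤ j → j ≤ g → f (v j) = (-1) ^ j)
    (hf0 : ∀ x : ℤ, (∀ j, 1 ≤ j → j ≤ g → x ≠ v j) → f x = 0) (x : ℤ) :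
    f x = ∑ j ∈ Icc 1 g, if (u j : ℤ) = x then (-1) ^ j else 0 := by
  by_cases hx : ∃ j, 1 ≤ j ∧ j ≤ g ∧ x = u j
  · obtain ⟨j, hj1, hj2, rfl⟩ := hx
    rw [sum_eq_single_of_mem j (mem_Icc.2 ⟨hj1, hj2⟩) fun i hi hij =>
        if_neg fun he => hij (hu (mem_Icc.1 hi) ⟨hj1, hj2⟩ (by exact_mod_cast he)),
      if_pos rfl, ← hf j hj1 hj2, hv j hj1 hj2]
  · push Not at hx
    rw [hf0 x fun j h1 h2 => hv j h1 h2 ▸ hx j h1 h2,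
      sum_eq_zero fun j hj => if_neg (hx j (mem_Icc.1 hj).1 (mem_Icc.1 hj).2).symm]

lemma sum_weighted_pairs_eq {S T : ℕ → ℕ} {g k : ℕ} (hS0 : S 0 = 0) (hT0 : T 0 = 0) (hk : 0 < k)
    (hSk : k < S (g + 1)) (hTk : k < T (g + 1)) :
    ∑ p ∈ Icc 0 (g + 1), ∑ q ∈ Icc 0 (g + 1),
      (if S p + T q = k then (if 0 < p ∧ 0 < q then 2 else 1) * (-1 : ℤ) ^ (p + q) else 0)
    = ∑ p ∈ Icc 1 g, (if S p = k then (-1) ^ p else 0)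
      + ∑ q ∈ Icc 1 g, (if T q = k then (-1) ^ q else 0)
      + 2 * ∑ p ∈ Icc 1 g, (-1) ^ p * ∑ q ∈ Icc 1 g, (if S p + T q = k then (-1) ^ q else 0) := by
  have hlastS : ∀ q, S (g + 1) + T q ≠ k := by omega
  have hlastT : ∀ p, S p + T (g + 1) ≠ k := by omega
  have hrow : ∀ p ∈ Icc 1 g, ∑ q ∈ Icc 0 (g + 1),
      (if S p + T q = k then (if 0 < p ∧ 0 < q then 2 else 1) * (-1 : ℤ) ^ (p + q) else 0)
      = (if S p = k then (-1) ^ p else 0)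
        + 2 * ((-1) ^ p * ∑ q ∈ Icc 1 g, (if S p + T q = k then (-1) ^ q else 0)) := by
    intro p hp
    rw [mem_Icc] at hp
    rw [sum_Icc_zero_add_one_eq]
    simp only [hT0, add_zero, lt_irrefl, and_false, if_false, one_mul, hlastT]
    congr 1
    rw [mul_sum, mul_sum]
    refine sum_congr rfl fun q hq => ?_
    rw [mem_Icc] at hq
    rw [if_pos (show 0 < p ∧ 0 < q by omega), pow_add]
    split_ifs <;> ring
  rw [sum_Icc_zero_add_one_eq, sum_congr rfl hrow, sum_add_distrib, ← mul_sum,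
    sum_Icc_zero_add_one_eq]
  simp only [hS0, hT0, zero_add, lt_irrefl, false_and, if_false, one_mul, hlastS, hk.ne,
    hTk.ne', sum_const_zero, add_zero]
  ring

/-- The runs of `a` are the intervals `(S p, S (p + 1)]` for `p < γ`; thus `S p` is the paper's
`s_p`, with `s_0 = 0`. -/
structure IsRunBoundaries (a : ℕ → ℤ) (n γ : ℕ) (S : ℕ → ℕ) : Prop where
  zero : S 0 = 0
  last : S γ = n
  strictMonoOn : StrictMonoOn S (Set.Iic γ)
  binary : ∀ i, 1 ≤ i → i ≤ n → a i = 1 ∨ a i = -1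
  apply_zero : a 0 = 0
  apply_last : a (n + 1) = 0
  const : ∀ p < γ, ∀ x, S p < x → x ≤ S (p + 1) → a x = a (S p + 1)
  ne : ∀ p, 0 < p → p < γ → a (S p) ≠ a (S p + 1)

lemma isRunBoundaries_of_runStarts {a : ℕ → ℤ} {n γ : ℕ} {I r : ℕ → ℕ}
    (hbin : ∀ i, 1 ≤ i → i ≤ n → a i = 1 ∨ a i = -1) (h0 : a 0 = 0) (htop : a (n + 1) = 0)
    (hI1 : I 1 = 1) (hIlast : I (γ + 1) = n + 1)
    (hImono : ∀ j, 1 ≤ j → j ≤ γ → I j < I (j + 1))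
    (hchange : ∀ j, 2 ≤ j → j ≤ γ → a (I j - 1) ≠ a (I j))
    (hconst : ∀ j, 1 ≤ j → j ≤ γ → ∀ p, I j ≤ p → p < I (j + 1) → a p = a (I j))
    (hr : ∀ j, 1 ≤ j → j ≤ γ → r j = I (j + 1) - I j) :
    IsRunBoundaries a n γ (fun p => ∑ u ∈ Icc 1 p, r u) := by
  set S : ℕ → ℕ := fun p => ∑ u ∈ Icc 1 p, r u
  have hI : ∀ p ≤ γ, I (p + 1) = S p + 1 := by
    intro p
    induction p with
    | zero => simp [S, hI1]
    | succ p ih =>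
      intro hp
      have := hImono (p + 1) (by omega) hp
      have := hr (p + 1) (by omega) hp
      have := ih (by omega)
      simp only [S, sum_Icc_succ_top (Nat.le_add_left 1 p)] at this ⊢
      omega
  refine
    { zero := by simp [S]
      last := by have := hI γ le_rfl; omega
      strictMonoOn := strictMonoOn_Iic_of_lt_succ fun p hp => ?_
      binary := hbin
      apply_zero := h0
      apply_last := htop
      const := fun p hp x hx hx' => ?_
      ne := fun p hp0 hp => ?_ }
  · have := hImono (p + 1) (by omega) (by omega)
    rw [Order.succ_eq_add_one]
    have := hI p hp.le
    have := hI (p + 1) hp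
    omega
  · have hstart : I (p + 1) = S p + 1 := hI p hp.le
    have hnext : I (p + 1 + 1) = S (p + 1) + 1 := hI (p + 1) hp
    have hx'' : x ≤ S (p + 1) := hx'
    rw [← hstart]
    exact hconst (p + 1) (by omega) (by omega) x (by omega) (by omega)
  · have hchange' := hchange (p + 1) (by omega) (by omega)
    rwa [hI p hp.le, Nat.add_sub_cancel] at hchange'

def blockWeight (a : ℕ → ℤ) (n k i : ℕ) : ℤ :=
  if a (i - 1) ≠ a i ∧ a (i + k - 1) ≠ a (i + k) then
    (if 1 < i ∧ i + k < n + 1 then 2 else 1) * (a i * a (i + k - 1))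
  else 0

lemma runVec_eq_neg_sum_blockWeight (a : ℕ → ℤ) (n k : ℕ) :
    runVec a n k = -∑ i ∈ Icc 1 (n + 1 - k), blockWeight a n k i :=
  rfl

namespace IsRunBoundaries

variable {a : ℕ → ℤ} {n γ : ℕ} {S : ℕ → ℕ}

lemma lt_iff_lt (h : IsRunBoundaries a n γ S) {p q : ℕ} (hp : p ≤ γ) (hq : q ≤ γ) :
    S p < S q ↔ p < q :=
  h.strictMonoOn.lt_iff_lt hp hq

lemma le_last (h : IsRunBoundaries a n γ S) {p : ℕ} (hp : p ≤ γ) : S p ≤ n :=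
  h.last ▸ h.strictMonoOn.monotoneOn hp Set.self_mem_Iic hp

lemma ne_iff (h : IsRunBoundaries a n γ S) (hn : 0 < n) {i : ℕ} (hi : 1 ≤ i) (hin : i ≤ n + 1) :
    a (i - 1) ≠ a i ↔ ∃ p ≤ γ, i = S p + 1 := by
  constructor
  · intro hne
    by_contra! hno
    have hin' : i ≠ n + 1 := fun hi => hno γ le_rfl (by rw [h.last, hi])
    obtain ⟨p, hp, hSp, hpS⟩ :=
      exists_le_lt_succ_of_le_of_lt S (x := i - 1) (by rw [h.zero]; omega) (by rw [h.last]; omega)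
    have hSp' : S p ≠ i - 1 := fun he => hno p hp.le (by omega)
    exact hne ((h.const p hp _ (by omega) (by omega)).trans
      (h.const p hp _ (by omega) (by omega)).symm)
  · rintro ⟨p, hp, rfl⟩
    rcases Nat.eq_zero_or_pos p with rfl | hp0
    · have := h.binary 1 le_rfl hn
      simp only [h.zero, zero_add, Nat.sub_self, h.apply_zero]
      omega
    rcases hp.lt_or_eq with hpγ | rfl
    · exact h.ne p hp0 hpγ
    · have := h.binary n hn le_rfl
      rw [h.last, Nat.add_sub_cancel, h.apply_last]
      omega

lemma apply_succ (h : IsRunBoundaries a n γ S) : ∀ p < γ, a (S p + 1) = a 1 * (-1) ^ p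
  | 0, _ => by simp [h.zero]
  | p + 1, hp => by
    have hlt : S p < S (p + 1) := (h.lt_iff_lt (by omega) (by omega)).2 (by omega)
    have hle : S (p + 1) < n := h.last ▸ (h.lt_iff_lt (by omega) le_rfl).2 hp
    have hprev : a (S (p + 1)) = a (S p + 1) := h.const p (by omega) _ hlt le_rfl
    have hflip : a (S (p + 1) + 1) = -a (S (p + 1)) := by
      have := h.binary _ (by omega) hle.le
      have := h.binary (S (p + 1) + 1) (by omega) hle
      have := h.ne (p + 1) (by omega) hp
      omega
    rw [hflip, hprev, apply_succ h p (by omega), pow_succ]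
    ring

lemma apply_self (h : IsRunBoundaries a n γ S) {p : ℕ} (hp0 : 0 < p) (hp : p ≤ γ) :
    a (S p) = -(a 1 * (-1) ^ p) := by
  obtain ⟨p, rfl⟩ := Nat.exists_eq_add_of_lt hp0
  have hlt : S p < S (p + 1) := (h.lt_iff_lt (by omega) (by omega)).2 (by omega)
  rw [zero_add, h.const p (by omega) _ hlt le_rfl, h.apply_succ p (by omega), pow_succ]
  ring

lemma blockWeight_eq (h : IsRunBoundaries a n γ S) (hn : 0 < n) {m p q : ℕ} (hm : 0 < m)
    (hp : p ≤ γ) (hq : q ≤ γ) (hpq : S p + m = S q) :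
    blockWeight a n m (S p + 1) = -((if 0 < p ∧ q < γ then 2 else 1) * (-1) ^ (p + q)) := by
  have hSq := h.le_last hq
  have hpq' : p < q := (h.lt_iff_lt hp hq).1 (by omega)
  have hstart : a (S p + 1 - 1) ≠ a (S p + 1) := (h.ne_iff hn (by omega) (by omega)).2 ⟨p, hp, rfl⟩
  have hend : a (S p + 1 + m - 1) ≠ a (S p + 1 + m) :=
    (h.ne_iff hn (by omega) (by omega)).2 ⟨q, hq, by omega⟩
  have hinner : (1 < S p + 1 ∧ S p + 1 + m < n + 1) ↔ (0 < p ∧ q < γ) := by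
    rw [← h.lt_iff_lt hq le_rfl, ← h.lt_iff_lt (Nat.zero_le _) hp, h.zero, h.last]
    omega
  have ha1 : a 1 * a 1 = 1 := by rcases h.binary 1 le_rfl hn with h1 | h1 <;> rw [h1] <;> rfl
  rw [blockWeight, if_pos ⟨hstart, hend⟩, if_congr hinner rfl rfl,
    show S p + 1 + m - 1 = S q by omega, h.apply_succ p (by omega), h.apply_self (by omega) hq,
    pow_add]
  linear_combination (-(if 0 < p ∧ q < γ then 2 else 1) * (-1 : ℤ) ^ p * (-1) ^ q) * ha1

lemma exists_of_blockWeight_ne_zero (h : IsRunBoundaries a n γ S) (hn : 0 < n) {m i : ℕ}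
    (hi : 1 ≤ i) (him : i + m ≤ n + 1) (hw : blockWeight a n m i ≠ 0) :
    ∃ p ≤ γ, ∃ q ≤ γ, S p + 1 = i ∧ S p + m = S q := by
  rw [blockWeight, ne_eq, ite_eq_right_iff, Classical.not_imp] at hw
  obtain ⟨p, hp, rfl⟩ := (h.ne_iff hn hi (by omega)).1 hw.1.1
  obtain ⟨q, hq, hpq⟩ := (h.ne_iff hn (by omega) him).1 (by simpa using hw.1.2)
  exact ⟨p, hp, q, hq, rfl, by omega⟩

lemma runVec_eq_sum (h : IsRunBoundaries a n γ S) {m : ℕ} (hm : 0 < m) (hmn : m ≤ n) :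
    runVec a n m = ∑ p ∈ Icc 0 γ, ∑ q ∈ Icc 0 γ,
      if S p + m = S q then (if 0 < p ∧ q < γ then 2 else 1) * (-1) ^ (p + q) else 0 := by
  have hn : 0 < n := hm.trans_le hmn
  rw [runVec_eq_neg_sum_blockWeight, ← sum_product', neg_eq_iff_eq_neg, ← sum_neg_distrib]
  symm
  refine sum_bij_ne_zero (fun x _ _ => S x.1 + 1) ?_ ?_ ?_ ?_
  · rintro ⟨p, q⟩ hpq hw
    simp only [mem_product, mem_Icc] at hpq
    have := h.le_last hpq.2.2
    have : S p + m = S q := of_not_not fun hne => hw (by rw [if_neg hne, neg_zero])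
    simp only [mem_Icc]
    omega
  · rintro ⟨p, q⟩ hpq hw ⟨p', q'⟩ hpq' hw' he
    simp only [mem_product, mem_Icc] at hpq hpq'
    have h1 : S p + m = S q := of_not_not fun hne => hw (by rw [if_neg hne, neg_zero])
    have h2 : S p' + m = S q' := of_not_not fun hne => hw' (by rw [if_neg hne, neg_zero])
    have hp : p = p' := h.strictMonoOn.injOn hpq.1.2 hpq'.1.2 (by simpa using he)
    exact Prod.ext hp (h.strictMonoOn.injOn hpq.2.2 hpq'.2.2 (by rw [← h1, ← h2, hp]))
  · intro i hi hw
    simp only [mem_Icc] at hi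
    obtain ⟨p, hp, q, hq, rfl, hpq⟩ := h.exists_of_blockWeight_ne_zero hn hi.1 (by omega) hw
    refine ⟨(p, q), by simp [hp, hq], ?_, rfl⟩
    rw [if_pos hpq]
    split_ifs <;> simp
  · rintro ⟨p, q⟩ hpq hw
    simp only [mem_product, mem_Icc] at hpq
    have : S p + m = S q := of_not_not fun hne => hw (by rw [if_neg hne, neg_zero])
    rw [if_pos this, h.blockWeight_eq hn hm hpq.1.2 hpq.2.2 this]

variable {T : ℕ → ℕ}

lemma injOn_of_add_eq (h : IsRunBoundaries a n γ S) (hST : ∀ q ≤ γ, S (γ - q) + T q = n) :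
    Set.InjOn T (Set.Iic γ) := fun p hp q hq he => by
  have hpq := h.strictMonoOn.injOn (show γ - p ∈ Set.Iic γ from Nat.sub_le γ p)
    (show γ - q ∈ Set.Iic γ from Nat.sub_le γ q) (by have := hST p hp; have := hST q hq; omega)
  simp only [Set.mem_Iic] at hp hq
  omega

/-- Reflecting `q' ↦ γ - q'`, i.e. writing `S q' = n - T (γ - q')`. -/
lemma neg_one_pow_mul_runVec_eq (h : IsRunBoundaries a n γ S)
    (hST : ∀ q ≤ γ, S (γ - q) + T q = n) {k : ℕ} (hk : 0 < k) (hkn : k < n) :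
    (-1) ^ γ * runVec a n (n - k) = ∑ p ∈ Icc 0 γ, ∑ q ∈ Icc 0 γ,
      if S p + T q = k then (if 0 < p ∧ 0 < q then 2 else 1) * (-1) ^ (p + q) else 0 := by
  rw [h.runVec_eq_sum (by omega) (by omega), mul_sum]
  refine sum_congr rfl fun p _ => ?_
  rw [mul_sum]
  refine sum_nbij' (γ - ·) (γ - ·) (by simp) (by simp) (fun q hq => ?_) (fun q hq => ?_)
    fun q hq => ?_
  · exact Nat.sub_sub_self (mem_Icc.1 hq).2
  · exact Nat.sub_sub_self (mem_Icc.1 hq).2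
  rw [mem_Icc] at hq
  have hSTq := hST (γ - q) (by omega)
  rw [Nat.sub_sub_self hq.2] at hSTq
  have hsign : (-1 : ℤ) ^ γ * (-1) ^ (p + q) = (-1) ^ (p + (γ - q)) := by
    rw [← pow_add, neg_one_pow_eq_pow_mod_two, neg_one_pow_eq_pow_mod_two (n := p + (γ - q)),
      show (γ + (p + q)) % 2 = (p + (γ - q)) % 2 by omega]
  rw [mul_ite, mul_zero, mul_left_comm, hsign]
  refine if_congr (by omega) ?_ rfl
  rw [if_congr (show 0 < p ∧ q < γ ↔ 0 < p ∧ 0 < γ - q by omega) rfl rfl]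

lemma neg_one_pow_mul_runVec_eq_add (h : IsRunBoundaries a n γ S)
    (hST : ∀ q ≤ γ, S (γ - q) + T q = n) {k : ℕ} (hk : 0 < k) (hkn : k < n) :
    (-1) ^ γ * runVec a n (n - k)
      = ∑ p ∈ Icc 1 (γ - 1), (if S p = k then (-1) ^ p else 0)
        + ∑ q ∈ Icc 1 (γ - 1), (if T q = k then (-1) ^ q else 0)
        + 2 * ∑ p ∈ Icc 1 (γ - 1), (-1) ^ p *
          ∑ q ∈ Icc 1 (γ - 1), (if S p + T q = k then (-1) ^ q else 0) := by
  obtain ⟨g, rfl⟩ : ∃ g, γ = g + 1 :=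
    Nat.exists_eq_succ_of_ne_zero fun hγ => by have := h.last; simp [hγ, h.zero] at this; omega
  have hT0 := hST 0 (Nat.zero_le _)
  have hTlast := hST (g + 1) le_rfl
  rw [Nat.sub_zero, h.last] at hT0
  rw [Nat.sub_self, h.zero] at hTlast
  rw [h.neg_one_pow_mul_runVec_eq hST hk hkn, Nat.add_sub_cancel]
  exact sum_weighted_pairs_eq h.zero (by omega) hk (by rw [h.last]; omega) (by omega)

end IsRunBoundaries

theorem stmt_13_general (n γ : ℕ) (a : ℕ → ℤ)
    (hbin : ∀ i, 1 ≤ i → i ≤ n → a i = 1 ∨ a i = -1)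
    (h0 : a 0 = 0) (htop : a (n + 1) = 0)
    -- `I j` (for `1 ≤ j ≤ γ+1`) are the starting positions of the runs of `a`:
    (I : ℕ → ℕ) (hI1 : I 1 = 1) (hIlast : I (γ + 1) = n + 1)
    (hImono : ∀ j, 1 ≤ j → j ≤ γ → I j < I (j + 1))
    (hchange : ∀ j, 2 ≤ j → j ≤ γ → a (I j - 1) ≠ a (I j))
    (hconst : ∀ j, 1 ≤ j → j ≤ γ → ∀ p, I j ≤ p → p < I (j + 1) → a p = a (I j))
    -- the run length encoding `r` and the partial sums `s`, `t`:
    (r : ℕ → ℕ) (hr : ∀ j, 1 ≤ j → j ≤ γ → r j = I (j + 1) - I j)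
    (s : ℕ → ℕ) (hs : ∀ j, 1 ≤ j → j ≤ γ → s j = ∑ u ∈ Finset.Icc 1 j, r u)
    (t : ℕ → ℕ) (ht : ∀ j, 1 ≤ j → j ≤ γ → t j = ∑ u ∈ Finset.Icc (γ - j + 1) γ, r u)
    -- the functions `f_S` and `f_T`:
    (fS : ℤ → ℤ)
    (hfS1 : ∀ j, 1 ≤ j → j ≤ γ - 1 → fS ((s j : ℤ)) = (-1) ^ j)
    (hfS0 : ∀ x : ℤ, (∀ j, 1 ≤ j → j ≤ γ - 1 → x ≠ (s j : ℤ)) → fS x = 0)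
    (fT : ℤ → ℤ)
    (hfT1 : ∀ j, 1 ≤ j → j ≤ γ - 1 → fT ((t j : ℤ)) = (-1) ^ j)
    (hfT0 : ∀ x : ℤ, (∀ j, 1 ≤ j → j ≤ γ - 1 → x ≠ (t j : ℤ)) → fT x = 0)
    (k : ℕ) (hk1 : 1 ≤ k) (hk2 : k ≤ n - 1) :
    (-1 : ℤ) ^ γ * runVec a n (n - k) = fS (k : ℤ) + fT (k : ℤ)
      + 2 * ∑ j ∈ Finset.Icc 1 (γ - 1), (-1 : ℤ) ^ j * fT ((k : ℤ) - (s j : ℤ)) := by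
  set S : ℕ → ℕ := fun p => ∑ u ∈ Icc 1 p, r u
  set T : ℕ → ℕ := fun q => ∑ u ∈ Icc (γ - q + 1) γ, r u
  have hrun : IsRunBoundaries a n γ S :=
    isRunBoundaries_of_runStarts hbin h0 htop hI1 hIlast hImono hchange hconst hr
  have hST : ∀ q ≤ γ, S (γ - q) + T q = n := fun q _ =>
    hrun.last ▸ sum_Icc_one_add_sum_Icc_add_one r (Nat.sub_le γ q)
  have hIcc : Set.Icc 1 (γ - 1) ⊆ Set.Iic γ :=
    Set.Icc_subset_Iic_self.trans (Set.Iic_subset_Iic.2 (Nat.sub_le γ 1))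
  have hfS := eq_sum_Icc_ite_of_injOn (hrun.strictMonoOn.injOn.mono hIcc)
    (fun j h1 h2 => hs j h1 (by omega)) hfS1 hfS0
  have hfT := eq_sum_Icc_ite_of_injOn ((hrun.injOn_of_add_eq hST).mono hIcc)
    (fun j h1 h2 => ht j h1 (by omega)) hfT1 hfT0
  rw [hrun.neg_one_pow_mul_runVec_eq_add hST hk1 (by omega), hfS, hfT]
  simp only [Nat.cast_inj]
  congr 2
  refine sum_congr rfl fun p hp => ?_
  rw [mem_Icc] at hp
  rw [hfT, show s p = S p from hs p hp.1 (by omega)]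
  exact congrArg _ (sum_congr rfl fun q _ => if_congr (by omega) rfl rfl)

theorem stmt_13 (n γ : ℕ) (hn : 1 ≤ n) (a : ℕ → ℤ)
    (hbin : ∀ i, 1 ≤ i → i ≤ n → a i = 1 ∨ a i = -1)
    (h0 : a 0 = 0) (htop : a (n + 1) = 0)
    -- `I j` (for `1 ≤ j ≤ γ+1`) are the starting positions of the runs of `a`:
    (I : ℕ → ℕ) (hI1 : I 1 = 1) (hIlast : I (γ + 1) = n + 1)
    (hImono : ∀ j, 1 ≤ j → j ≤ γ → I j < I (j + 1))
    (hchange : ∀ j, 2 ≤ j → j ≤ γ → a (I j - 1) ≠ a (I j))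
    (hconst : ∀ j, 1 ≤ j → j ≤ γ → ∀ p, I j ≤ p → p < I (j + 1) → a p = a (I j))
    -- the run length encoding `r` and the partial sums `s`, `t`:
    (r : ℕ → ℕ) (hr : ∀ j, 1 ≤ j → j ≤ γ → r j = I (j + 1) - I j)
    (s : ℕ → ℕ) (hs : ∀ j, 1 ≤ j → j ≤ γ → s j = ∑ u ∈ Finset.Icc 1 j, r u)
    (t : ℕ → ℕ) (ht : ∀ j, 1 ≤ j → j ≤ γ → t j = ∑ u ∈ Finset.Icc (γ - j + 1) γ, r u)
    -- the functions `f_S` and `f_T`: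
    (fS : ℤ → ℤ)
    (hfS1 : ∀ j, 1 ≤ j → j ≤ γ - 1 → fS ((s j : ℤ)) = (-1) ^ j)
    (hfS0 : ∀ x : ℤ, (∀ j, 1 ≤ j → j ≤ γ - 1 → x ≠ (s j : ℤ)) → fS x = 0)
    (fT : ℤ → ℤ)
    (hfT1 : ∀ j, 1 ≤ j → j ≤ γ - 1 → fT ((t j : ℤ)) = (-1) ^ j)
    (hfT0 : ∀ x : ℤ, (∀ j, 1 ≤ j → j ≤ γ - 1 → x ≠ (t j : ℤ)) → fT x = 0)
    (k : ℕ) (hk1 : 1 ≤ k) (hk2 : k ≤ n - 1) :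
    (-1 : ℤ) ^ γ * runVec a n (n - k) = fS (k : ℤ) + fT (k : ℤ)
      + 2 * ∑ j ∈ Finset.Icc 1 (γ - 1), (-1 : ℤ) ^ j * fT ((k : ℤ) - (s j : ℤ)) :=
  stmt_13_general n γ a hbin h0 htop I hI1 hIlast hImono hchange hconst r hr s hs t ht fS hfS1 hfS0
    fT hfT1 hfT0 k hk1 hk2
end

section
/- Let a be a skew-symmetric binary sequence of odd length n = 2m−1. Then R_k(a) = C_k(a) for every even k with 2 ≤ k ≤ n−1, and R_k(a) = −(C_{k−1}(a) + C_{k+1}(a))/2 for every odd k with 1 ≤ k ≤ n−1, where C_n(a) := 0. -/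
open Finset

def IsBinarySeq (a : ℕ → ℤ) (n : ℕ) : Prop :=
  ∀ i, 1 ≤ i → i ≤ n → a i = 1 ∨ a i = -1

def IsSkewSymmetricSeq (a : ℕ → ℤ) (m : ℕ) : Prop :=
  ∀ i, 1 ≤ i → i ≤ m - 1 → a (m - i) = (-1) ^ i * a (m + i)

section Autocorrelation

variable {a : ℕ → ℤ} {m n k : ℕ}

lemma IsSkewSymmetricSeq.apply_two_mul_sub (hskew : IsSkewSymmetricSeq a m) {j : ℕ}
    (hj : 1 ≤ j) (hjm : j < 2 * m) : a (2 * m - j) = (-1) ^ (m + j) * a j := by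
  rcases lt_trichotomy j m with hlt | rfl | hgt
  · have h := hskew (m - j) (by omega) (by omega)
    rw [show m - (m - j) = j by omega, show m + (m - j) = 2 * m - j by omega] at h
    rw [h, ← mul_assoc, ← pow_add, show m + j + (m - j) = 2 * m by omega, pow_mul]
    simp
  · rw [show 2 * j - j = j by omega, ← two_mul, pow_mul]
    simp
  · have h := hskew (j - m) (by omega) (by omega)
    rw [show m - (j - m) = 2 * m - j by omega, show m + (j - m) = j by omega] at h
    rw [h, show m + j = (j - m) + 2 * m by omega, pow_add, pow_mul]
    simp

lemma IsSkewSymmetricSeq.aperCorr_eq_neg_one_pow_mul (hskew : IsSkewSymmetricSeq a m)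
    (hn : n + 1 = 2 * m) (k : ℕ) : aperCorr a n k = (-1) ^ k * aperCorr a n k := by
  rw [aperCorr, mul_sum]
  refine sum_nbij' (fun i ↦ n + 1 - k - i) (fun i ↦ n + 1 - k - i) ?_ ?_ ?_ ?_ ?_ <;>
    intro i hi <;> simp only [mem_Icc] at hi ⊢
  · omega
  · omega
  · omega
  · omega
  · rw [show n + 1 - k - i = 2 * m - (i + k) by omega, show 2 * m - (i + k) + k = 2 * m - i by omega,
      hskew.apply_two_mul_sub (by omega) (by omega), hskew.apply_two_mul_sub (by omega) (by omega)]
    have hsign : ((-1 : ℤ) ^ (m + (i + k))) * (-1) ^ (m + i) = (-1) ^ k := by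
      rw [← pow_add, show m + (i + k) + (m + i) = k + 2 * (m + i) by omega, pow_add, pow_mul]
      simp
    have hsq : ((-1 : ℤ) ^ k) ^ 2 = 1 := by rw [← pow_mul, mul_comm, pow_mul]; simp
    linear_combination (-(-1 : ℤ) ^ k * (a i * a (i + k))) * hsign - (a i * a (i + k)) * hsq

lemma IsSkewSymmetricSeq.aperCorr_eq_zero_of_odd (hskew : IsSkewSymmetricSeq a m)
    (hn : n + 1 = 2 * m) (hk : Odd k) : aperCorr a n k = 0 := by
  have h := hskew.aperCorr_eq_neg_one_pow_mul hn k
  rw [hk.neg_one_pow] at h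
  omega

end Autocorrelation

section RunVector

variable {a : ℕ → ℤ} {n k : ℕ}

lemma sum_Icc_one_succ_pred (f : ℕ → ℤ) (hf : f 0 = 0) (N : ℕ) :
    ∑ i ∈ Icc 1 (N + 1), f (i - 1) = ∑ i ∈ Icc 1 N, f i := by
  induction N with
  | zero => simp [hf]
  | succ N ih => rw [sum_Icc_succ_top (by omega), ih, sum_Icc_succ_top (by omega)]; rfl

lemma aperCorr_eq_sum_Icc_succ (htop : a (n + 1) = 0) (hk : k ≤ n) :
    aperCorr a n k = ∑ i ∈ Icc 1 (n + 1 - k), a i * a (i + k) := by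
  rw [show n + 1 - k = n - k + 1 by omega, sum_Icc_succ_top (by omega),
    show n - k + 1 + k = n + 1 by omega, htop, mul_zero, add_zero, aperCorr]

lemma aperCorr_eq_sum_Icc_pred (h0 : a 0 = 0) (hk : k ≤ n) :
    aperCorr a n k = ∑ i ∈ Icc 1 (n + 1 - k), a (i - 1) * a (i + k - 1) := by
  calc aperCorr a n k = ∑ i ∈ Icc 1 (n - k + 1), (fun j ↦ a j * a (j + k)) (i - 1) := by
        exact (sum_Icc_one_succ_pred (fun j ↦ a j * a (j + k)) (by simp [h0]) _).symm
    _ = _ := by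
        rw [show n - k + 1 = n + 1 - k by omega]
        refine sum_congr rfl fun i hi ↦ ?_
        rw [mem_Icc] at hi
        dsimp only
        rw [show i - 1 + k = i + k - 1 by omega]

lemma aperCorr_succ_eq_sum_Icc_pred (h0 : a 0 = 0) (htop : a (n + 1) = 0) (hk : k < n) :
    aperCorr a n (k + 1) = ∑ i ∈ Icc 1 (n + 1 - k), a (i - 1) * a (i + k) := by
  calc aperCorr a n (k + 1)
      = ∑ i ∈ Icc 1 (n - k + 1), (fun j ↦ a j * a (j + (k + 1))) (i - 1) := by
        rw [sum_Icc_one_succ_pred (fun j ↦ a j * a (j + (k + 1))) (by simp [h0]),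
          aperCorr_eq_sum_Icc_succ htop hk, show n + 1 - (k + 1) = n - k by omega]
    _ = _ := by
        rw [show n - k + 1 = n + 1 - k by omega]
        refine sum_congr rfl fun i hi ↦ ?_
        rw [mem_Icc] at hi
        dsimp only
        rw [show i - 1 + (k + 1) = i + k by omega]

lemma aperCorr_pred_eq_sum_Icc (hk : 1 ≤ k) :
    aperCorr a n (k - 1) = ∑ i ∈ Icc 1 (n + 1 - k), a i * a (i + k - 1) := by
  rw [aperCorr, show n - (k - 1) = n + 1 - k by omega]
  refine sum_congr rfl fun i _ ↦ ?_
  rw [show i + (k - 1) = i + k - 1 by omega]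

lemma sub_eq_two_mul_of_ne {x y : ℤ} (hx : x = 1 ∨ x = -1) (hy : y = 1 ∨ y = -1) (h : y ≠ x) :
    x - y = 2 * x := by
  omega

lemma IsBinarySeq.sub_pred_of_ne (hbin : IsBinarySeq a n) (h0 : a 0 = 0) {i : ℕ} (hi : 1 ≤ i)
    (hin : i ≤ n) (h : a (i - 1) ≠ a i) : a i - a (i - 1) = (if 1 < i then 2 else 1) * a i := by
  split_ifs with hi1
  · exact sub_eq_two_mul_of_ne (hbin i hi hin) (hbin (i - 1) (by omega) (by omega)) h
  · obtain rfl : i = 1 := by omega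
    rw [Nat.sub_self, h0, sub_zero, one_mul]

lemma IsBinarySeq.sub_succ_of_ne (hbin : IsBinarySeq a n) (htop : a (n + 1) = 0) {j : ℕ}
    (hj : 1 ≤ j) (hjn : j ≤ n) (h : a j ≠ a (j + 1)) :
    a j - a (j + 1) = (if j < n then 2 else 1) * a j := by
  split_ifs with hjn'
  · exact sub_eq_two_mul_of_ne (hbin j hj hjn) (hbin (j + 1) (by omega) (by omega)) h.symm
  · obtain rfl : j = n := by omega
    rw [htop, sub_zero, one_mul]

lemma IsBinarySeq.two_mul_runWeight (hbin : IsBinarySeq a n) (h0 : a 0 = 0)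
    (htop : a (n + 1) = 0) {i : ℕ} (hi : 1 ≤ i) (hik : i + k ≤ n + 1) (hk : 1 ≤ k) (hkn : k < n) :
    2 * (if a (i - 1) ≠ a i ∧ a (i + k - 1) ≠ a (i + k) then
        (if 1 < i ∧ i + k < n + 1 then 2 else 1) * (a i * a (i + k - 1)) else 0)
      = (a i - a (i - 1)) * (a (i + k - 1) - a (i + k)) := by
  obtain ⟨j, hj⟩ : ∃ j, i + k = j + 1 := ⟨i + k - 1, by omega⟩
  rw [hj, Nat.add_sub_cancel]
  by_cases hstart : a (i - 1) = a i
  · rw [hstart, sub_self, zero_mul, if_neg (by tauto), mul_zero]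
  by_cases hend : a j = a (j + 1)
  · rw [hend, sub_self, mul_zero, if_neg (by tauto), mul_zero]
  rw [if_pos ⟨hstart, hend⟩, hbin.sub_pred_of_ne h0 hi (by omega) hstart,
    hbin.sub_succ_of_ne htop (by omega) (by omega) hend]
  split_ifs <;> first | omega | ring

lemma IsBinarySeq.two_mul_runVec (hbin : IsBinarySeq a n) (h0 : a 0 = 0) (htop : a (n + 1) = 0)
    (hk : 1 ≤ k) (hkn : k < n) :
    2 * runVec a n k = 2 * aperCorr a n k - aperCorr a n (k - 1) - aperCorr a n (k + 1) := by
  calc 2 * runVec a n k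
      = ∑ i ∈ Icc 1 (n + 1 - k), -((a i - a (i - 1)) * (a (i + k - 1) - a (i + k))) := by
        rw [runVec, mul_neg, mul_sum, ← sum_neg_distrib]
        refine sum_congr rfl fun i hi ↦ ?_
        rw [mem_Icc] at hi
        rw [hbin.two_mul_runWeight h0 htop hi.1 (by omega) hk hkn]
    _ = ∑ i ∈ Icc 1 (n + 1 - k), (a (i - 1) * a (i + k - 1) + a i * a (i + k)
          - a i * a (i + k - 1) - a (i - 1) * a (i + k)) :=
        sum_congr rfl fun _ _ ↦ by ring
    _ = _ := by
        rw [sum_sub_distrib, sum_sub_distrib, sum_add_distrib,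
          ← aperCorr_eq_sum_Icc_pred h0 hkn.le, ← aperCorr_eq_sum_Icc_succ htop hkn.le,
          ← aperCorr_pred_eq_sum_Icc hk, ← aperCorr_succ_eq_sum_Icc_pred h0 htop hkn, two_mul]

end RunVector

theorem stmt_15_general (m n : ℕ) (hnm : n = 2 * m - 1) (a : ℕ → ℤ)
    (hbin : ∀ i, 1 ≤ i → i ≤ n → a i = 1 ∨ a i = -1)
    (h0 : a 0 = 0) (htop : a (n + 1) = 0)
    (hskew : ∀ i, 1 ≤ i → i ≤ m - 1 → a (m - i) = (-1) ^ i * a (m + i)) :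
    (∀ k, 2 ≤ k → k ≤ n - 1 → Even k → runVec a n k = aperCorr a n k) ∧
    (∀ k, 1 ≤ k → k ≤ n - 1 → Odd k →
      runVec a n k = (-(aperCorr a n (k - 1) + aperCorr a n (k + 1))) / 2) := by
  refine ⟨fun k hk2 hkn hk ↦ ?_, fun k hk1 hkn hk ↦ ?_⟩
  · have hn : n + 1 = 2 * m := by omega
    have hpred := IsSkewSymmetricSeq.aperCorr_eq_zero_of_odd hskew hn
      (Nat.Even.sub_odd (by omega) hk odd_one)
    have hsucc := IsSkewSymmetricSeq.aperCorr_eq_zero_of_odd hskew hn hk.add_one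
    have hrun := IsBinarySeq.two_mul_runVec hbin h0 htop (k := k) (by omega) (by omega)
    omega
  · have hn : n + 1 = 2 * m := by omega
    have hcorr := IsSkewSymmetricSeq.aperCorr_eq_zero_of_odd hskew hn hk
    have hrun := IsBinarySeq.two_mul_runVec hbin h0 htop hk1 (by omega)
    omega

theorem stmt_15 (m n : ℕ) (hm : 1 ≤ m) (hnm : n = 2 * m - 1) (a : ℕ → ℤ)
    (hbin : ∀ i, 1 ≤ i → i ≤ n → a i = 1 ∨ a i = -1)
    (h0 : a 0 = 0) (htop : a (n + 1) = 0)
    (hskew : ∀ i, 1 ≤ i → i ≤ m - 1 → a (m - i) = (-1) ^ i * a (m + i)) :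
    (∀ k, 2 ≤ k → k ≤ n - 1 → Even k → runVec a n k = aperCorr a n k) ∧
    (∀ k, 1 ≤ k → k ≤ n - 1 → Odd k →
      runVec a n k = (-(aperCorr a n (k - 1) + aperCorr a n (k + 1))) / 2) :=
  stmt_15_general m n hnm a hbin h0 htop hskew
end

section
/- A binary sequence a of odd length n = 2m−1 is skew-symmetric if and only if its run length encoding r is balanced, i.e. if and only if S ∪ T = {1,2,…,n−1} and S ∩ T = ∅. -/
/-!
The partial sums `s j` are exactly the run boundaries, i.e. the positions `1 ≤ k ≤ n - 1` with
`a k ≠ a (k + 1)`, and the `t j` are their mirror images `n - k`. So the encoding is balanced iff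
for every `k`, `a` changes between `k` and `k + 1` exactly when it does not change between `n - k`
and `n - k + 1`. For a `±1` sequence that is skew-symmetric on `m - i, …, m + i`, this condition at
`k = m - i - 1` is equivalent to skew-symmetry at `i + 1`, so induction on `i` finishes the proof.
-/

open Finset

structure IsRunStarts {α : Type*} (a : ℕ → α) (n γ : ℕ) (I : ℕ → ℕ) : Prop where
  one : I 1 = 1
  last : I (γ + 1) = n + 1
  lt_add_one : ∀ j, 1 ≤ j → j ≤ γ → I j < I (j + 1)
  ne_pred : ∀ j, 2 ≤ j → j ≤ γ → a (I j - 1) ≠ a (I j)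
  const : ∀ j, 1 ≤ j → j ≤ γ → ∀ p, I j ≤ p → p < I (j + 1) → a p = a (I j)

namespace IsRunStarts

variable {α : Type*} {a : ℕ → α} {n γ : ℕ} {I : ℕ → ℕ}

theorem strictMonoOn (hI : IsRunStarts a n γ I) : StrictMonoOn I (Set.Icc 1 (γ + 1)) :=
  strictMonoOn_of_lt_add_one Set.ordConnected_Icc fun j _ hj hj' =>
    hI.lt_add_one j hj.1 (by simp only [Set.mem_Icc] at hj'; omega)

theorem two_le_and_le (hI : IsRunStarts a n γ I) {j : ℕ} (hj : 2 ≤ j) (hjγ : j ≤ γ) :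
    2 ≤ I j ∧ I j ≤ n := by
  have h1 := hI.strictMonoOn ⟨le_rfl, by omega⟩ ⟨by omega, by omega⟩ (by omega : 1 < j)
  have h2 := hI.strictMonoOn ⟨by omega, by omega⟩ ⟨by omega, le_rfl⟩ (by omega : j < γ + 1)
  rw [hI.one] at h1
  rw [hI.last] at h2
  omega

theorem exists_mem_run (hI : IsRunStarts a n γ I) {p : ℕ} (hp : 1 ≤ p) (hpn : p ≤ n) :
    ∃ j, 1 ≤ j ∧ j ≤ γ ∧ I j ≤ p ∧ p < I (j + 1) := by
  classical
  -- the run containing `p` is the first `j` with `p < I (j + 1)`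
  have hex : ∃ j, p < I (j + 1) := ⟨γ, by rw [hI.last]; omega⟩
  have hmin : ∀ j < Nat.find hex, I (j + 1) ≤ p := fun j hj => not_lt.1 (Nat.find_min hex hj)
  have hpos : 1 ≤ Nat.find hex := by
    by_contra h
    have := Nat.find_spec hex
    rw [show Nat.find hex = 0 by omega, hI.one] at this
    omega
  refine ⟨Nat.find hex, hpos, Nat.find_min' hex ?_, ?_, Nat.find_spec hex⟩
  · rw [hI.last]; omega
  · simpa [Nat.sub_add_cancel hpos] using hmin (Nat.find hex - 1) (by omega)

theorem exists_eq_add_one_iff (hI : IsRunStarts a n γ I) {k : ℕ} :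
    (∃ j, 2 ≤ j ∧ j ≤ γ ∧ I j = k + 1) ↔ 1 ≤ k ∧ k ≤ n - 1 ∧ a k ≠ a (k + 1) := by
  constructor
  · rintro ⟨j, hj, hjγ, hIj⟩
    have hb := hI.two_le_and_le hj hjγ
    refine ⟨by omega, by omega, ?_⟩
    simpa [hIj] using hI.ne_pred j hj hjγ
  · rintro ⟨hk, hkn, hne⟩
    obtain ⟨j, hj, hjγ, hle, hlt⟩ := hI.exists_mem_run (p := k + 1) (by omega) (by omega)
    have hIj : I j = k + 1 := by
      by_contra h
      exact hne ((hI.const j hj hjγ k (by omega) (by omega)).trans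
        (hI.const j hj hjγ (k + 1) hle hlt).symm)
    refine ⟨j, ?_, hjγ, hIj⟩
    by_contra h
    rw [show j = 1 by omega, hI.one] at hIj
    omega

theorem sum_Ico_eq_sub (hI : IsRunStarts a n γ I) {r : ℕ → ℕ}
    (hr : ∀ j, 1 ≤ j → j ≤ γ → r j = I (j + 1) - I j) {i k : ℕ} (hi : 1 ≤ i) (hik : i ≤ k)
    (hk : k ≤ γ + 1) : ∑ u ∈ Ico i k, r u = I k - I i := by
  induction k, hik using Nat.le_induction with
  | base => simp
  | succ k hik ih =>
    have hmono : I i ≤ I k := hI.strictMonoOn.monotoneOn ⟨hi, by omega⟩ ⟨by omega, by omega⟩ hik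
    rw [sum_Ico_succ_top hik, ih (by omega), hr k (by omega) (by omega)]
    have := hI.lt_add_one k (by omega) (by omega)
    omega

theorem mem_image_partialSum_iff (hI : IsRunStarts a n γ I) {r s : ℕ → ℕ}
    (hr : ∀ j, 1 ≤ j → j ≤ γ → r j = I (j + 1) - I j)
    (hs : ∀ j, 1 ≤ j → j ≤ γ → s j = ∑ u ∈ Icc 1 j, r u) {k : ℕ} :
    k ∈ (Icc 1 (γ - 1)).image s ↔ 1 ≤ k ∧ k ≤ n - 1 ∧ a k ≠ a (k + 1) := by
  have hs' : ∀ j ∈ Icc 1 (γ - 1), s j = I (j + 1) - 1 := fun j hj => by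
    rw [mem_Icc] at hj
    rw [hs j hj.1 (by omega), ← Finset.Ico_add_one_right_eq_Icc,
      hI.sum_Ico_eq_sub hr le_rfl (by omega) (by omega), hI.one]
  rw [image_congr hs', ← hI.exists_eq_add_one_iff, mem_image]
  constructor
  · rintro ⟨j, hj, rfl⟩
    rw [mem_Icc] at hj
    have := (hI.two_le_and_le (j := j + 1) (by omega) (by omega)).1
    exact ⟨j + 1, by omega, by omega, by omega⟩
  · rintro ⟨j, hj, hjγ, hIj⟩
    exact ⟨j - 1, mem_Icc.2 ⟨by omega, by omega⟩, by rw [Nat.sub_add_cancel (by omega), hIj]; rfl⟩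

theorem mem_image_suffixSum_iff (hI : IsRunStarts a n γ I) {r t : ℕ → ℕ}
    (hr : ∀ j, 1 ≤ j → j ≤ γ → r j = I (j + 1) - I j)
    (ht : ∀ j, 1 ≤ j → j ≤ γ → t j = ∑ u ∈ Icc (γ - j + 1) γ, r u) {k : ℕ} :
    k ∈ (Icc 1 (γ - 1)).image t ↔ 1 ≤ k ∧ k ≤ n - 1 ∧ a (n - k) ≠ a (n - k + 1) := by
  have ht' : ∀ j ∈ Icc 1 (γ - 1), t j = n + 1 - I (γ - j + 1) := fun j hj => by
    rw [mem_Icc] at hj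
    rw [ht j hj.1 (by omega), ← Finset.Ico_add_one_right_eq_Icc,
      hI.sum_Ico_eq_sub hr (by omega) (by omega) le_rfl, hI.last]
  rw [image_congr ht', mem_image]
  constructor
  · rintro ⟨j, hj, rfl⟩
    rw [mem_Icc] at hj
    have hb := hI.two_le_and_le (j := γ - j + 1) (by omega) (by omega)
    obtain ⟨-, -, hne⟩ := hI.exists_eq_add_one_iff.1 ⟨γ - j + 1, by omega, by omega,
      (by omega : I (γ - j + 1) = n - (n + 1 - I (γ - j + 1)) + 1)⟩
    exact ⟨by omega, by omega, hne⟩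
  · rintro ⟨hk, hkn, hne⟩
    obtain ⟨j, hj, hjγ, hIj⟩ := hI.exists_eq_add_one_iff.2 ⟨by omega, by omega, hne⟩
    refine ⟨γ + 1 - j, mem_Icc.2 ⟨by omega, by omega⟩, ?_⟩
    rw [show γ - (γ + 1 - j) + 1 = j by omega, hIj]
    omega

end IsRunStarts

theorem Finset.union_eq_and_inter_eq_empty_iff {β : Type*} [DecidableEq β] {S T U : Finset β}
    (hS : S ⊆ U) (hT : T ⊆ U) : S ∪ T = U ∧ S ∩ T = ∅ ↔ ∀ x ∈ U, (x ∈ T ↔ x ∉ S) := by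
  constructor
  · rintro ⟨hU, hST⟩ x hx
    rw [← hU, mem_union] at hx
    have := eq_empty_iff_forall_notMem.1 hST x
    rw [mem_inter] at this
    tauto
  · intro h
    refine ⟨(union_subset hS hT).antisymm fun x hx => ?_, eq_empty_iff_forall_notMem.2 fun x hx => ?_⟩
    · rw [mem_union]; have := h x hx; tauto
    · rw [mem_inter] at hx; exact (h x (hS hx.1)).1 hx.2 hx.1

theorem forall_le_iff_forall_lt_of_step {P Q : ℕ → Prop} {N : ℕ} (h0 : P 0)
    (hstep : ∀ i < N, P i → (P (i + 1) ↔ Q i)) : (∀ i ≤ N, P i) ↔ ∀ i < N, Q i := by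
  induction N with
  | zero => simpa using h0
  | succ N ih =>
    have ih := ih fun i hi => hstep i (by omega)
    constructor
    · intro h i hi
      rcases Nat.lt_succ_iff_lt_or_eq.1 hi with hi | rfl
      · exact ih.1 (fun j hj => h j (by omega)) i hi
      · exact (hstep i hi (h i (by omega))).1 (h (i + 1) le_rfl)
    · intro h i hi
      have hP : ∀ j ≤ N, P j := ih.2 fun j hj => h j (by omega)
      rcases Nat.le_succ_iff.1 hi with hi | rfl
      · exact hP i hi
      · exact (hstep N (by omega) (hP N le_rfl)).2 (h N (by omega))

theorem Int.eq_neg_mul_iff_ne_iff_eq_mul {x z w e : ℤ} (hx : x = 1 ∨ x = -1)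
    (hz : z = 1 ∨ z = -1) (hw : w = 1 ∨ w = -1) (he : e = 1 ∨ e = -1) :
    x = -e * w ↔ (z ≠ w ↔ x = e * z) := by
  rcases hx with rfl | rfl <;> rcases hz with rfl | rfl <;> rcases hw with rfl | rfl <;>
    rcases he with rfl | rfl <;> decide

theorem forall_mirror_change_iff {α : Type*} {a : ℕ → α} {m n : ℕ} (hnm : n = 2 * m - 1) :
    (∀ k ∈ Icc 1 (n - 1), (a (n - k) ≠ a (n - k + 1) ↔ a k = a (k + 1))) ↔
      ∀ i < m - 1, (a (m + i) ≠ a (m + i + 1) ↔ a (m - (i + 1)) = a (m - i)) := by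
  constructor
  · intro h i hi
    have := h (m - (i + 1)) (mem_Icc.2 ⟨by omega, by omega⟩)
    rwa [show n - (m - (i + 1)) = m + i by omega, show m - (i + 1) + 1 = m - i by omega] at this
  · intro h k hk
    rw [mem_Icc] at hk
    rcases Nat.lt_or_ge k m with hkm | hkm
    · have := h (m - 1 - k) (by omega)
      rwa [show m + (m - 1 - k) = n - k by omega, show m - (m - 1 - k + 1) = k by omega,
        show m - (m - 1 - k) = k + 1 by omega] at this
    · have := h (k - m) (by omega)
      rw [show m + (k - m) = k by omega, show m - (k - m + 1) = n - k by omega,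
        show m - (k - m) = n - k + 1 by omega] at this
      tauto

theorem skewSymmetric_iff_forall_mirror_change {a : ℕ → ℤ} {m n : ℕ} (hnm : n = 2 * m - 1)
    (hbin : ∀ i, 1 ≤ i → i ≤ n → a i = 1 ∨ a i = -1) :
    (∀ i, 1 ≤ i → i ≤ m - 1 → a (m - i) = (-1) ^ i * a (m + i)) ↔
      ∀ k ∈ Icc 1 (n - 1), (a (n - k) ≠ a (n - k + 1) ↔ a k = a (k + 1)) := by
  rw [forall_mirror_change_iff hnm]
  have hpos : (∀ i, 1 ≤ i → i ≤ m - 1 → a (m - i) = (-1) ^ i * a (m + i)) ↔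
      ∀ i ≤ m - 1, a (m - i) = (-1) ^ i * a (m + i) :=
    ⟨fun h i hi => (Nat.eq_zero_or_pos i).elim (fun h0 => by simp [h0]) (h i · hi),
      fun h i _ hi => h i hi⟩
  rw [hpos]
  refine forall_le_iff_forall_lt_of_step (by simp) fun i hi hskew => ?_
  rw [hskew, pow_succ, mul_neg_one, ← add_assoc]
  exact Int.eq_neg_mul_iff_ne_iff_eq_mul (hbin _ (by omega) (by omega))
    (hbin _ (by omega) (by omega)) (hbin _ (by omega) (by omega)) (neg_one_pow_eq_or ℤ i)

theorem stmt_16_general (m n γ : ℕ) (hnm : n = 2 * m - 1) (a : ℕ → ℤ)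
    (hbin : ∀ i, 1 ≤ i → i ≤ n → a i = 1 ∨ a i = -1)
    -- `I j` (for `1 ≤ j ≤ γ+1`) are the starting positions of the runs of `a`:
    (I : ℕ → ℕ) (hI1 : I 1 = 1) (hIlast : I (γ + 1) = n + 1)
    (hImono : ∀ j, 1 ≤ j → j ≤ γ → I j < I (j + 1))
    (hchange : ∀ j, 2 ≤ j → j ≤ γ → a (I j - 1) ≠ a (I j))
    (hconst : ∀ j, 1 ≤ j → j ≤ γ → ∀ p, I j ≤ p → p < I (j + 1) → a p = a (I j))
    -- the run length encoding `r` and the partial sums `s`, `t`: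
    (r : ℕ → ℕ) (hr : ∀ j, 1 ≤ j → j ≤ γ → r j = I (j + 1) - I j)
    (s : ℕ → ℕ) (hs : ∀ j, 1 ≤ j → j ≤ γ → s j = ∑ u ∈ Finset.Icc 1 j, r u)
    (t : ℕ → ℕ) (ht : ∀ j, 1 ≤ j → j ≤ γ → t j = ∑ u ∈ Finset.Icc (γ - j + 1) γ, r u)
    -- the sets `S` and `T`:
    (S T : Finset ℕ)
    (hS : S = (Finset.Icc 1 (γ - 1)).image s)
    (hT : T = (Finset.Icc 1 (γ - 1)).image t) :
    -- `a` is skew-symmetric iff its run length encoding is balanced: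
    (∀ i, 1 ≤ i → i ≤ m - 1 → a (m - i) = (-1) ^ i * a (m + i)) ↔
      (S ∪ T = Finset.Icc 1 (n - 1) ∧ S ∩ T = ∅) := by
  have hI : IsRunStarts a n γ I := ⟨hI1, hIlast, hImono, hchange, hconst⟩
  have hSmem := fun k => hI.mem_image_partialSum_iff hr hs (k := k)
  have hTmem := fun k => hI.mem_image_suffixSum_iff hr ht (k := k)
  subst hS hT
  rw [skewSymmetric_iff_forall_mirror_change hnm hbin, union_eq_and_inter_eq_empty_iff
    (fun k hk => mem_Icc.2 ⟨((hSmem k).1 hk).1, ((hSmem k).1 hk).2.1⟩)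
    (fun k hk => mem_Icc.2 ⟨((hTmem k).1 hk).1, ((hTmem k).1 hk).2.1⟩)]
  refine forall₂_congr fun k hk => ?_
  rw [mem_Icc] at hk
  simp only [hSmem, hTmem, hk, true_and, not_not]

theorem stmt_16 (m n γ : ℕ) (hm : 1 ≤ m) (hnm : n = 2 * m - 1) (a : ℕ → ℤ)
    (hbin : ∀ i, 1 ≤ i → i ≤ n → a i = 1 ∨ a i = -1)
    (h0 : a 0 = 0)
    -- `I j` (for `1 ≤ j ≤ γ+1`) are the starting positions of the runs of `a`:
    (I : ℕ → ℕ) (hI1 : I 1 = 1) (hIlast : I (γ + 1) = n + 1)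
    (hImono : ∀ j, 1 ≤ j → j ≤ γ → I j < I (j + 1))
    (hchange : ∀ j, 2 ≤ j → j ≤ γ → a (I j - 1) ≠ a (I j))
    (hconst : ∀ j, 1 ≤ j → j ≤ γ → ∀ p, I j ≤ p → p < I (j + 1) → a p = a (I j))
    -- the run length encoding `r` and the partial sums `s`, `t`:
    (r : ℕ → ℕ) (hr : ∀ j, 1 ≤ j → j ≤ γ → r j = I (j + 1) - I j)
    (s : ℕ → ℕ) (hs : ∀ j, 1 ≤ j → j ≤ γ → s j = ∑ u ∈ Finset.Icc 1 j, r u)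
    (t : ℕ → ℕ) (ht : ∀ j, 1 ≤ j → j ≤ γ → t j = ∑ u ∈ Finset.Icc (γ - j + 1) γ, r u)
    -- the sets `S` and `T`:
    (S T : Finset ℕ)
    (hS : S = (Finset.Icc 1 (γ - 1)).image s)
    (hT : T = (Finset.Icc 1 (γ - 1)).image t) :
    -- `a` is skew-symmetric iff its run length encoding is balanced:
    (∀ i, 1 ≤ i → i ≤ m - 1 → a (m - i) = (-1) ^ i * a (m + i)) ↔
      (S ∪ T = Finset.Icc 1 (n - 1) ∧ S ∩ T = ∅) :=
  stmt_16_general m n γ hnm a hbin I hI1 hIlast hImono hchange hconst r hr s hs t ht S T hS hT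
end
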